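/- arXiv:2411.05334 — 7 statements merged into one kernel-verified Lean document; each statement's English description precedes it below -/
import Mathlib

section
/- First fundamental theorem of double almost-Riordan arrays, even case: Let u = Σ_{k≥0} u_{2k}t^{2k} be an even formal power series in K[[t]] and set U := Σ_{k≥0} u_{2k+2}t^{k}. Then for every n ≥ 0, Σ_{k=0}^{n} d_{n,k}·([t^k]u) = [t^n]( u₀·b + t·g·f₁·(U∘(f₁f₂)) ); i.e., applying (b|g;f₁,f₂) to the coefficient vector of an even series u produces the coefficient vector of u₀·b + (t g/f₂)(u(√(f₁f₂)) − u₀). -/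
open PowerSeries

variable {K : Type*} [Field K]

/-- Formal substitution `U ∘ h` of a power series `h` (intended with `h(0) = 0`)
into a power series `U`:  `[tⁿ](U∘h) = Σ_{j≤n} ([tʲ]U)·[tⁿ](hʲ)`. -/
noncomputable def psComp (U h : PowerSeries K) : PowerSeries K :=
  PowerSeries.mk fun n => ∑ j ∈ Finset.range (n + 1), coeff j U * coeff n (h ^ j)

/-- The `(n,k)` entry of the double almost-Riordan array `(b | g ; f₁, f₂)`:
column 0 is `b`, column `2ℓ+1` is `t·g·(f₁f₂)^ℓ`, column `2ℓ+2` is `t·g·f₁·(f₁f₂)^ℓ`. -/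
noncomputable def dar (b g f₁ f₂ : PowerSeries K) (n k : ℕ) : K :=
  if k = 0 then coeff n b
  else if k % 2 = 1 then coeff n (X * g * (f₁ * f₂) ^ ((k - 1) / 2))
  else coeff n (X * g * f₁ * (f₁ * f₂) ^ ((k - 2) / 2))

/-!
Against an even `u`, only column 0 and the even columns `2j + 2`, i.e. `t·g·f₁·(f₁f₂)ʲ`,
contribute, with weights `[t^{2j+2}]u = [tʲ]U`; summed up, this is coefficientwise
`t·g·f₁·(U ∘ f₁f₂)`. Since `f₁f₂` has order at least 2, the array is lower triangular, so the
row sum may be extended past the diagonal, and `U ∘ f₁f₂` is determined in degree `≤ n` by a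
finite truncation of `U`.
-/

open Finset

theorem sum_range_two_mul_of_odd_eq_zero {M : Type*} [AddCommMonoid M] {F : ℕ → M}
    (hF : ∀ i, F (2 * i + 1) = 0) (m : ℕ) :
    ∑ k ∈ range (2 * m), F k = ∑ i ∈ range m, F (2 * i) := by
  induction m with
  | zero => simp
  | succ m ih =>
    rw [Nat.mul_succ, sum_range_succ, sum_range_succ, ih, hF, add_zero, sum_range_succ]

section Composition

variable {U h : PowerSeries K}

theorem coeff_psComp_eq_sum_range (hh : X ∣ h) {m N : ℕ} (hmN : m ≤ N) :
    coeff m (psComp U h) = ∑ j ∈ range (N + 1), coeff j U * coeff m (h ^ j) := by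
  rw [psComp, coeff_mk]
  refine sum_subset (range_subset_range.mpr (by omega)) fun j _ hj => ?_
  rw [X_pow_dvd_iff.mp (pow_dvd_pow_of_dvd hh j) m (by simp at hj; omega), mul_zero]

theorem coeff_mul_psComp (hh : X ∣ h) (A : PowerSeries K) (n : ℕ) :
    coeff n (A * psComp U h) = ∑ j ∈ range (n + 1), coeff n (A * h ^ j) * coeff j U := by
  have htrunc : coeff n (A * psComp U h) =
      coeff n (A * ∑ j ∈ range (n + 1), C (coeff j U) * h ^ j) := by
    simp only [coeff_mul]
    refine sum_congr rfl fun p hp => ?_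
    simp only [coeff_psComp_eq_sum_range hh (HasAntidiagonal.antidiagonal.snd_le hp), map_sum,
      coeff_C_mul]
  rw [htrunc, mul_sum, map_sum]
  refine sum_congr rfl fun j _ => ?_
  rw [mul_left_comm, coeff_C_mul, mul_comm]

end Composition

section Array

variable {b g f₁ f₂ : PowerSeries K} {n : ℕ}

theorem dar_zero : dar b g f₁ f₂ n 0 = coeff n b := if_pos rfl

theorem dar_two_mul_add_one (ℓ : ℕ) :
    dar b g f₁ f₂ n (2 * ℓ + 1) = coeff n (X * g * (f₁ * f₂) ^ ℓ) := by
  rw [dar, if_neg (by omega), if_pos (by omega), Nat.add_sub_cancel,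
    Nat.mul_div_cancel_left _ two_pos]

theorem dar_two_mul_add_two (ℓ : ℕ) :
    dar b g f₁ f₂ n (2 * ℓ + 2) = coeff n (X * g * f₁ * (f₁ * f₂) ^ ℓ) := by
  rw [dar, if_neg (by omega), if_neg (by omega), Nat.add_sub_cancel,
    Nat.mul_div_cancel_left _ two_pos]

theorem dar_eq_zero_of_lt (h₁ : X ∣ f₁) (h₂ : X ∣ f₂) {k : ℕ} (hnk : n < k) :
    dar b g f₁ f₂ n k = 0 := by
  have hX2 : (X * X : PowerSeries K) ∣ f₁ * f₂ := mul_dvd_mul h₁ h₂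
  obtain ⟨m, rfl | rfl⟩ := Nat.even_or_odd' k
  · obtain ⟨ℓ, rfl⟩ : ∃ ℓ, m = ℓ + 1 := ⟨m - 1, by omega⟩
    have hdvd : (X : PowerSeries K) ^ (2 * ℓ + 2) ∣ X * g * f₁ * (f₁ * f₂) ^ ℓ := by
      rw [show (X : PowerSeries K) ^ (2 * ℓ + 2) = X * X * (X * X) ^ ℓ by ring]
      exact mul_dvd_mul (mul_dvd_mul (dvd_mul_right X g) h₁) (pow_dvd_pow_of_dvd hX2 ℓ)
    rw [Nat.mul_succ, dar_two_mul_add_two, X_pow_dvd_iff.mp hdvd n (by omega)]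
  · have hdvd : (X : PowerSeries K) ^ (2 * m + 1) ∣ X * g * (f₁ * f₂) ^ m := by
      rw [show (X : PowerSeries K) ^ (2 * m + 1) = X * (X * X) ^ m by ring]
      exact mul_dvd_mul (dvd_mul_right X g) (pow_dvd_pow_of_dvd hX2 m)
    rw [dar_two_mul_add_one, X_pow_dvd_iff.mp hdvd n hnk]

end Array

theorem fft_even_general
    (b g f₁ f₂ : PowerSeries K)
    (hf₁o : ∀ k, coeff (2 * k) f₁ = 0)
    (hf₂o : ∀ k, coeff (2 * k) f₂ = 0)
    (u U : PowerSeries K)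
    (hue : ∀ k, coeff (2 * k + 1) u = 0)
    (hU : ∀ k, coeff k U = coeff (2 * k + 2) u) :
    ∀ n : ℕ,
      ∑ k ∈ Finset.range (n + 1), dar b g f₁ f₂ n k * coeff k u =
        coeff n (C (constantCoeff u) * b + X * g * f₁ * psComp U (f₁ * f₂)) := by
  intro n
  have h₁ : X ∣ f₁ := X_dvd_iff.mpr (by simpa using hf₁o 0)
  have h₂ : X ∣ f₂ := X_dvd_iff.mpr (by simpa using hf₂o 0)
  set F : ℕ → K := fun k => dar b g f₁ f₂ n k * coeff k u
  have hF_odd : ∀ i, F (2 * i + 1) = 0 := fun i => by simp [F, hue i]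
  calc ∑ k ∈ range (n + 1), F k
      = ∑ k ∈ range (2 * (n + 2)), F k :=
        sum_subset (range_subset_range.mpr (by omega)) fun k _ hk => by
          simp [F, dar_eq_zero_of_lt h₁ h₂ (by simp at hk; omega : n < k)]
    _ = ∑ i ∈ range (n + 2), F (2 * i) := sum_range_two_mul_of_odd_eq_zero hF_odd _
    _ = ∑ i ∈ range (n + 1), F (2 * i + 2) + F 0 := sum_range_succ' _ _
    _ = _ := by
        simp only [F, dar_zero, dar_two_mul_add_two, ← hU, map_add, coeff_C_mul,
          coeff_mul_psComp (dvd_mul_of_dvd_left h₁ f₂), coeff_zero_eq_constantCoeff_apply]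
        ring

/-- First fundamental theorem of double almost-Riordan arrays, even case. -/
theorem fft_even
    (b g f₁ f₂ : PowerSeries K)
    (hbe : ∀ k, coeff (2 * k + 1) b = 0)
    (hge : ∀ k, coeff (2 * k + 1) g = 0)
    (hb0 : constantCoeff b ≠ 0)
    (hg0 : constantCoeff g ≠ 0)
    (hf₁o : ∀ k, coeff (2 * k) f₁ = 0)
    (hf₂o : ∀ k, coeff (2 * k) f₂ = 0)
    (hf₁1 : coeff 1 f₁ ≠ 0)
    (hf₂1 : coeff 1 f₂ ≠ 0)
    (u U : PowerSeries K)
    (hue : ∀ k, coeff (2 * k + 1) u = 0)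
    (hU : ∀ k, coeff k U = coeff (2 * k + 2) u) :
    ∀ n : ℕ,
      ∑ k ∈ Finset.range (n + 1), dar b g f₁ f₂ n k * coeff k u =
        coeff n (C (constantCoeff u) * b + X * g * f₁ * psComp U (f₁ * f₂)) :=
  fft_even_general b g f₁ f₂ hf₁o hf₂o u U hue hU
end

section
/- Closed forms of the characteristic sequences of a double almost-Riordan array: Suppose s ∈ K[[t]] is odd with [t]s ≠ 0 and s² = f₁·f₂, and s̄ is odd with [t]s̄ ≠ 0, s∘s̄ = t and s̄∘s = t. Suppose Ã, Z̃₁, Z̃₂, W̃ ∈ K[[t]] satisfy: f₁·f₂ = t²·(Ã∘(f₁f₂)); g·(1 − t²·(Z̃₁∘(f₁f₂))) = g₀; b₀·t²·g·(Z̃₂∘(f₁f₂)) = g₀·f_{1,1}·t²·g + f₂·(b₀·g·f₁ − g₀·f_{1,1}·t·b); and b₀·f₂·(b − b₀) = b₂·t²·b·f₂ + t³·g·(b₀·(W̃∘(f₁f₂)) − b₂), where b₂ = [t²]b. Then the even generating functions A := Ã∘(t²), Z₁ := Z̃₁∘(t²), Z₂ := Z̃₂∘(t²), W := W̃∘(t²)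 satisfy: (i) A·s̄² = t² (i.e., A(t) = t²/s̄²); (ii) Z₁·s̄²·(g∘s̄) = (g∘s̄) − g₀ (i.e., Z₁(t) = (1/s̄²)(1 − g₀/g(s̄))); (iii) b₀·s̄²·(g∘s̄)·Z₂ = g₀·f_{1,1}·s̄²·(g∘s̄) + b₀·t²·(g∘s̄) − g₀·f_{1,1}·s̄·(b∘s̄)·(f₂∘s̄); (iv) b₀·s̄³·(g∘s̄)·W = (f₂∘s̄)·((b₀ − b₂·s̄²)·(b∘s̄) − b₀²) + b₂·s̄³·(g∘s̄). -/
/-!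
Right composition with `s̄` is a ring endomorphism of `K⟦t⟧` (it is Mathlib's `subst s̄`), and it
sends `f₁f₂ = s²` to `(s∘s̄)² = t²`. Composing each defining identity of `Ã, Z̃₁, Z̃₂, W̃` with `s̄`
therefore turns every `U∘(f₁f₂)` into `U∘t²`, and the four closed forms are linear rearrangements
of the composed identities, using `(f₁∘s̄)(f₂∘s̄) = t²`.
-/

open PowerSeries

variable {K : Type*} [Field K]

/- `psComp` agrees with Mathlib's `PowerSeries.subst` whenever `h(0) = 0`: the terms with `j > n`
that `psComp` truncates away vanish because `tⁿ⁺¹ ∣ hʲ`. -/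
lemma psComp_eq_subst {h : K⟦X⟧} (h0 : constantCoeff h = 0) (U : K⟦X⟧) :
    psComp U h = U.subst h := by
  ext n
  rw [psComp, coeff_mk, coeff_subst' (.of_constantCoeff_zero' h0),
    finsum_eq_sum_of_support_subset]
  · rfl
  intro j hj
  by_contra hjn
  refine hj (smul_eq_zero_of_right _ (coeff_of_lt_order n ?_))
  simp only [Finset.coe_range, Set.mem_Iio, not_lt] at hjn
  exact (Nat.cast_lt.mpr hjn).trans_le (le_order_pow_of_constantCoeff_eq_zero j h0)

noncomputable def psCompRingHom {h : K⟦X⟧} (h0 : constantCoeff h = 0) : K⟦X⟧ →+* K⟦X⟧ :=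
  (substAlgHom (R := K) (τ := Unit) (HasSubst.of_constantCoeff_zero' h0)).toRingHom.copy
    (psComp · h) (funext fun U => by simp [psComp_eq_subst h0, coe_substAlgHom])

lemma psComp_C (a : K) (h : K⟦X⟧) : psComp (C a) h = C a := by
  ext n
  simp [psComp, coeff_C, coeff_one]

section

variable {h : K⟦X⟧} (h0 : constantCoeff h = 0)
include h0

lemma psCompRingHom_apply (U : K⟦X⟧) : psCompRingHom h0 U = psComp U h := rfl

lemma psComp_X : psComp X h = h := by
  rw [psComp_eq_subst h0, subst_X (.of_constantCoeff_zero' h0)]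

lemma psComp_psComp {k : K⟦X⟧} (k0 : constantCoeff k = 0) (U : K⟦X⟧) :
    psComp (psComp U h) k = psComp U (psComp h k) := by
  have hk0 : constantCoeff (psComp h k) = 0 := by
    rw [← coeff_zero_eq_constantCoeff_apply]
    simp [psComp, h0]
  rw [psComp_eq_subst h0, psComp_eq_subst k0, psComp_eq_subst hk0, psComp_eq_subst k0,
    subst_comp_subst_apply (.of_constantCoeff_zero' h0) (.of_constantCoeff_zero' k0)]

end

theorem dar_seq_closed_forms_general
    (b g f₁ f₂ : PowerSeries K)
    (hf₂o : ∀ k, coeff (2 * k) f₂ = 0)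
    (s sb : PowerSeries K)
    (hs2 : s ^ 2 = f₁ * f₂)
    (hsbo : ∀ k, coeff (2 * k) sb = 0)
    (hssb : psComp s sb = X)
    (At Z₁t Z₂t Wt : PowerSeries K)
    (hA : f₁ * f₂ = X ^ 2 * psComp At (f₁ * f₂))
    (hZ₁ : g * (1 - X ^ 2 * psComp Z₁t (f₁ * f₂)) = C (constantCoeff g))
    (hZ₂ : C (constantCoeff b) * X ^ 2 * g * psComp Z₂t (f₁ * f₂) =
        C (constantCoeff g * coeff 1 f₁) * X ^ 2 * g +
          f₂ * (C (constantCoeff b) * g * f₁ -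
            C (constantCoeff g * coeff 1 f₁) * X * b))
    (hW : C (constantCoeff b) * f₂ * (b - C (constantCoeff b)) =
        C (coeff 2 b) * X ^ 2 * b * f₂ +
          X ^ 3 * g * (C (constantCoeff b) * psComp Wt (f₁ * f₂) - C (coeff 2 b))) :
    psComp At (X ^ 2) * sb ^ 2 = X ^ 2 ∧
    psComp Z₁t (X ^ 2) * sb ^ 2 * psComp g sb =
      psComp g sb - C (constantCoeff g) ∧
    C (constantCoeff b) * sb ^ 2 * psComp g sb * psComp Z₂t (X ^ 2) =
      C (constantCoeff g * coeff 1 f₁) * sb ^ 2 * psComp g sb +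
        C (constantCoeff b) * X ^ 2 * psComp g sb -
        C (constantCoeff g * coeff 1 f₁) * sb * psComp b sb * psComp f₂ sb ∧
    C (constantCoeff b) * sb ^ 3 * psComp g sb * psComp Wt (X ^ 2) =
      psComp f₂ sb *
          ((C (constantCoeff b) - C (coeff 2 b) * sb ^ 2) * psComp b sb -
            C (constantCoeff b ^ 2)) +
        C (coeff 2 b) * sb ^ 3 * psComp g sb := by
  have hsb0 : constantCoeff sb = 0 := by simpa using hsbo 0
  have hf0 : constantCoeff (f₁ * f₂) = 0 := by
    rw [map_mul, show constantCoeff f₂ = 0 by simpa using hf₂o 0, mul_zero]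
  set φ := psCompRingHom hsb0
  have hφX : φ X = sb := psComp_X hsb0
  have hφC (a : K) : φ (C a) = C a := psComp_C a sb
  have hsq : φ (f₁ * f₂) = X ^ 2 := by rw [← hs2, map_pow, psCompRingHom_apply, hssb]
  have hφcomp (U : K⟦X⟧) : φ (psComp U (f₁ * f₂)) = psComp U (X ^ 2) := by
    rw [psCompRingHom_apply, psComp_psComp hf0 hsb0, ← psCompRingHom_apply hsb0, hsq]
  have hA' := congrArg φ hA
  have hZ₁' := congrArg φ hZ₁
  have hZ₂' := congrArg φ hZ₂
  have hW' := congrArg φ hW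
  simp only [map_mul, map_add, map_sub, map_pow, map_one, hφX, hφC, hφcomp]
    at hA' hZ₁' hZ₂' hW' hsq
  simp only [φ, psCompRingHom_apply] at hA' hZ₁' hZ₂' hW' hsq
  simp only [map_mul, map_pow]
  exact ⟨by linear_combination hsq - hA', by linear_combination -hZ₁',
    by linear_combination hZ₂' + C (constantCoeff b) * psComp g sb * hsq, by linear_combination -hW'⟩

/-- Closed forms of the characteristic sequences of a double almost-Riordan array. -/
theorem dar_seq_closed_forms
    (b g f₁ f₂ : PowerSeries K)
    (hbe : ∀ k, coeff (2 * k + 1) b = 0)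
    (hge : ∀ k, coeff (2 * k + 1) g = 0)
    (hb0 : constantCoeff b ≠ 0)
    (hg0 : constantCoeff g ≠ 0)
    (hf₁o : ∀ k, coeff (2 * k) f₁ = 0)
    (hf₂o : ∀ k, coeff (2 * k) f₂ = 0)
    (hf₁1 : coeff 1 f₁ ≠ 0)
    (hf₂1 : coeff 1 f₂ ≠ 0)
    (s sb : PowerSeries K)
    (hso : ∀ k, coeff (2 * k) s = 0)
    (hs1 : coeff 1 s ≠ 0)
    (hs2 : s ^ 2 = f₁ * f₂)
    (hsbo : ∀ k, coeff (2 * k) sb = 0)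
    (hsb1 : coeff 1 sb ≠ 0)
    (hssb : psComp s sb = X)
    (hsbs : psComp sb s = X)
    (At Z₁t Z₂t Wt : PowerSeries K)
    (hA : f₁ * f₂ = X ^ 2 * psComp At (f₁ * f₂))
    (hZ₁ : g * (1 - X ^ 2 * psComp Z₁t (f₁ * f₂)) = C (constantCoeff g))
    (hZ₂ : C (constantCoeff b) * X ^ 2 * g * psComp Z₂t (f₁ * f₂) =
        C (constantCoeff g * coeff 1 f₁) * X ^ 2 * g +
          f₂ * (C (constantCoeff b) * g * f₁ -
            C (constantCoeff g * coeff 1 f₁) * X * b))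
    (hW : C (constantCoeff b) * f₂ * (b - C (constantCoeff b)) =
        C (coeff 2 b) * X ^ 2 * b * f₂ +
          X ^ 3 * g * (C (constantCoeff b) * psComp Wt (f₁ * f₂) - C (coeff 2 b))) :
    psComp At (X ^ 2) * sb ^ 2 = X ^ 2 ∧
    psComp Z₁t (X ^ 2) * sb ^ 2 * psComp g sb =
      psComp g sb - C (constantCoeff g) ∧
    C (constantCoeff b) * sb ^ 2 * psComp g sb * psComp Z₂t (X ^ 2) =
      C (constantCoeff g * coeff 1 f₁) * sb ^ 2 * psComp g sb +
        C (constantCoeff b) * X ^ 2 * psComp g sb -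
        C (constantCoeff g * coeff 1 f₁) * sb * psComp b sb * psComp f₂ sb ∧
    C (constantCoeff b) * sb ^ 3 * psComp g sb * psComp Wt (X ^ 2) =
      psComp f₂ sb *
          ((C (constantCoeff b) - C (coeff 2 b) * sb ^ 2) * psComp b sb -
            C (constantCoeff b ^ 2)) +
        C (coeff 2 b) * sb ^ 3 * psComp g sb :=
  dar_seq_closed_forms_general b g f₁ f₂ hf₂o s sb hs2 hsbo hssb At Z₁t Z₂t Wt hA hZ₁ hZ₂ hW
end

section
/- Production matrix of a double almost-Riordan array: Suppose Ã, Z̃₁, Z̃₂, W̃ ∈ K[[t]] satisfy: f₁·f₂ = t²·(Ã∘(f₁f₂)); g·(1 − t²·(Z̃₁∘(f₁f₂))) = g₀; b₀·t²·g·(Z̃₂∘(f₁f₂)) = g₀·f_{1,1}·t²·g + f₂·(b₀·g·f₁ − g₀·f_{1,1}·t·b); and b₀·f₂·(b − b₀) = b₂·t²·b·f₂ + t³·g·(b₀·(W̃∘(f₁f₂)) − b₂), where b₂ = [t²]b. Put A := Ã∘(t²), Z₁ := Z̃₁∘(t²), Z₂ := Z̃₂∘(t²), W := W̃∘(t²),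 and define the infinite matrix P = (p_{j,k})_{j,k≥0} by its column generating functions: p_{j,0} = [t^j]W, p_{j,1} = [t^j](t·Z₁), p_{j,2} = [t^j]Z₂, and p_{j,k} = [t^j](t^{k−2}·A) for k ≥ 3. Then for all n, k ≥ 0, Σ_{j=0}^{n} d_{n,j}·p_{j,k} = d_{n+2,k}; that is, D·P equals the matrix obtained from D by deleting its first two rows, so P = (W(t), tZ₁(t), Z₂(t), tA(t), t²A(t), t³A(t), …) is the production matrix of D = (b|g;f₁,f₂). -/
open PowerSeries

variable {K : Type*} [Field K]

/-!
Write `F = f₁f₂` and `c_k` for the generating function of column `k` of `D`, so that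
`d_{n,k} = [tⁿ] c_k` and `tᵏ ∣ c_k`. For `s ≥ 1` the columns `c_s, c_{s+2}, c_{s+4}, …` form the
geometric progression `c_s·Fⁱ`, so `D` times a column `tˢ·U(t²)` is the column `c_s·(U∘F)`. The
identities defining `A` and `Z₁` say that `t²` times this column is `c_k` up to terms of degree
`< 2`, which is the shift by two rows. For `k = 0, 2` the progression starts at `c_0 = b`, so one
first splits `U = U(0) + t·U'`; the identities for `W` and `Z₂` then do the same job once
`b₀·W(0) = b₂` and `b₀·Z₂(0) = g₀·f_{1,1}` are read off from their coefficients of `t³` and `t²`.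
-/

open Finset

lemma coeff_pow_eq_zero_of_lt {h : PowerSeries K} (hh : constantCoeff h = 0) {m i : ℕ}
    (hmi : m < i) : coeff m (h ^ i) = 0 :=
  X_pow_dvd_iff.mp (pow_dvd_pow_of_dvd (X_dvd_iff.mpr hh) i) m hmi

lemma coeff_psComp_of_le (U : PowerSeries K) {h : PowerSeries K} (hh : constantCoeff h = 0)
    {m N : ℕ} (hmN : m ≤ N) :
    coeff m (psComp U h) = ∑ i ∈ range (N + 1), coeff i U * coeff m (h ^ i) := by
  rw [psComp, coeff_mk]
  refine sum_subset (range_subset_range.mpr (by omega)) fun i _ hi => ?_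
  rw [coeff_pow_eq_zero_of_lt hh (by simpa using hi), mul_zero]

lemma coeff_mul_psComp_of_le (G U : PowerSeries K) {h : PowerSeries K}
    (hh : constantCoeff h = 0) {n N : ℕ} (hnN : n ≤ N) :
    coeff n (G * psComp U h) = ∑ i ∈ range (N + 1), coeff i U * coeff n (G * h ^ i) := by
  simp_rw [coeff_mul, mul_sum]
  rw [sum_comm]
  refine sum_congr rfl fun p hp => ?_
  rw [coeff_psComp_of_le U hh ((HasAntidiagonal.antidiagonal.snd_le hp).trans hnN), mul_sum]
  exact sum_congr rfl fun i _ => mul_left_comm _ _ _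

lemma psComp_eq_C_add_mul (U : PowerSeries K) {h : PowerSeries K} (hh : constantCoeff h = 0) :
    psComp U h = C (constantCoeff U) + h * psComp (mk fun i => coeff (i + 1) U) h := by
  ext n
  rw [← one_mul (psComp U h), coeff_mul_psComp_of_le 1 U hh n.le_succ, sum_range_succ',
    map_add, coeff_mul_psComp_of_le h _ hh le_rfl, coeff_C, add_comm]
  simp [pow_succ', coeff_one]

lemma sum_coeff_mul_coeff_X_pow_mul_psComp_X_sq (c : ℕ → PowerSeries K)
    (hc : ∀ j, (X : PowerSeries K) ^ j ∣ c j) (U : PowerSeries K) (s n : ℕ) :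
    ∑ j ∈ range (n + 1), coeff n (c j) * coeff j (X ^ s * psComp U (X ^ 2)) =
      ∑ i ∈ range (n + 1), coeff i U * coeff n (c (s + 2 * i)) := by
  have hQ : ∀ j ∈ range (n + 1), coeff j (X ^ s * psComp U (X ^ 2)) =
      ∑ i ∈ range (n + 1), coeff i U * if j = s + 2 * i then 1 else 0 := fun j hj => by
    rw [coeff_mul_psComp_of_le _ U (by simp) (mem_range_succ_iff.mp hj)]
    simp_rw [← pow_mul, ← pow_add, coeff_X_pow]
  rw [sum_congr rfl fun j hj => congrArg (coeff n (c j) * ·) (hQ j hj)]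
  simp_rw [mul_sum, mul_left_comm (coeff n (c _)), mul_ite, mul_one, mul_zero]
  rw [sum_comm]
  refine sum_congr rfl fun i _ => ?_
  rw [sum_ite_eq']
  split_ifs with hi
  · rfl
  · rw [X_pow_dvd_iff.mp (hc _) n (by simpa using hi), mul_zero]

section DoubleAlmostRiordan

variable (b g f₁ f₂ : PowerSeries K)

noncomputable def darCol (k : ℕ) : PowerSeries K :=
  if k = 0 then b
  else if k % 2 = 1 then X * g * (f₁ * f₂) ^ ((k - 1) / 2)
  else X * g * f₁ * (f₁ * f₂) ^ ((k - 2) / 2)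

lemma dar_eq_coeff_darCol (n k : ℕ) : dar b g f₁ f₂ n k = coeff n (darCol b g f₁ f₂ k) := by
  unfold dar darCol
  split_ifs <;> rfl

lemma darCol_zero : darCol b g f₁ f₂ 0 = b := rfl

lemma darCol_two_mul_add_one (l : ℕ) :
    darCol b g f₁ f₂ (2 * l + 1) = X * g * (f₁ * f₂) ^ l := by
  simp [darCol]

lemma darCol_one : darCol b g f₁ f₂ 1 = X * g := by
  simp [darCol]

lemma darCol_two : darCol b g f₁ f₂ 2 = X * g * f₁ := by
  simp [darCol]

lemma darCol_two_mul_add_two (l : ℕ) :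
    darCol b g f₁ f₂ (2 * l + 2) = X * g * f₁ * (f₁ * f₂) ^ l := by
  simp [darCol]

lemma darCol_add_two_mul {s : ℕ} (hs : s ≠ 0) (i : ℕ) :
    darCol b g f₁ f₂ (s + 2 * i) = darCol b g f₁ f₂ s * (f₁ * f₂) ^ i := by
  obtain ⟨l, rfl | rfl⟩ := Nat.even_or_odd' s
  · obtain ⟨l, rfl⟩ := Nat.exists_eq_succ_of_ne_zero (by omega : l ≠ 0)
    rw [show 2 * (l + 1) + 2 * i = 2 * (l + i) + 2 by ring, show 2 * (l + 1) = 2 * l + 2 by ring,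
      darCol_two_mul_add_two, darCol_two_mul_add_two, pow_add]
    ring
  · rw [show 2 * l + 1 + 2 * i = 2 * (l + i) + 1 by ring, darCol_two_mul_add_one,
      darCol_two_mul_add_one, pow_add]
    ring

variable {b g f₁ f₂}

lemma X_pow_dvd_darCol (h₁ : X ∣ f₁) (h₂ : X ∣ f₂) (k : ℕ) :
    (X : PowerSeries K) ^ k ∣ darCol b g f₁ f₂ k := by
  have hF : (X : PowerSeries K) ^ 2 ∣ f₁ * f₂ := pow_two (X : PowerSeries K) ▸ mul_dvd_mul h₁ h₂
  obtain ⟨l, rfl | rfl⟩ := Nat.even_or_odd' k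
  · rcases l with _ | l
    · simp
    rw [show 2 * (l + 1) = 2 * l + 2 by ring, darCol_two_mul_add_two,
      show (X : PowerSeries K) ^ (2 * l + 2) = X * X * (X ^ 2) ^ l by ring]
    exact mul_dvd_mul (mul_dvd_mul (dvd_mul_right X g) h₁) (pow_dvd_pow_of_dvd hF l)
  · rw [darCol_two_mul_add_one, show (X : PowerSeries K) ^ (2 * l + 1) = X * (X ^ 2) ^ l by ring]
    exact mul_dvd_mul (dvd_mul_right X g) (pow_dvd_pow_of_dvd hF l)

lemma sum_dar_mul_coeff_X_pow_mul_psComp (h₁ : X ∣ f₁) (h₂ : X ∣ f₂) (U : PowerSeries K)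
    {s : ℕ} (hs : s ≠ 0) (n : ℕ) :
    ∑ j ∈ range (n + 1), dar b g f₁ f₂ n j * coeff j (X ^ s * psComp U (X ^ 2)) =
      coeff n (darCol b g f₁ f₂ s * psComp U (f₁ * f₂)) := by
  simp_rw [dar_eq_coeff_darCol, sum_coeff_mul_coeff_X_pow_mul_psComp_X_sq _
    (X_pow_dvd_darCol h₁ h₂), darCol_add_two_mul b g f₁ f₂ hs]
  rw [coeff_mul_psComp_of_le _ U (by rw [map_mul, X_dvd_iff.mp h₁, zero_mul]) le_rfl]

lemma sum_dar_mul_coeff_psComp (h₁ : X ∣ f₁) (h₂ : X ∣ f₂) (U : PowerSeries K) (n : ℕ) :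
    ∑ j ∈ range (n + 1), dar b g f₁ f₂ n j * coeff j (psComp U (X ^ 2)) =
      coeff n (C (constantCoeff U) * b +
        X * g * f₁ * psComp (mk fun i => coeff (i + 1) U) (f₁ * f₂)) := by
  rw [psComp_eq_C_add_mul U (by simp)]
  simp_rw [map_add, mul_add, sum_add_distrib, coeff_C, mul_ite, mul_zero, sum_ite_eq',
    sum_dar_mul_coeff_X_pow_mul_psComp h₁ h₂ _ two_ne_zero, coeff_C_mul]
  rw [if_pos (by simp), dar_eq_coeff_darCol, darCol_zero, darCol_two, mul_comm]

lemma b₀_mul_z₀_eq_g₀_mul_f₁₁ {Z : PowerSeries K} (hg0 : constantCoeff g ≠ 0)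
    (hf₁0 : coeff 0 f₁ = 0) (hf₂0 : coeff 0 f₂ = 0)
    (hZ : C (constantCoeff b) * X ^ 2 * g * psComp Z (f₁ * f₂) =
        C (constantCoeff g * coeff 1 f₁) * X ^ 2 * g +
          f₂ * (C (constantCoeff b) * g * f₁ - C (constantCoeff g * coeff 1 f₁) * X * b)) :
    constantCoeff b * constantCoeff Z = constantCoeff g * coeff 1 f₁ := by
  have h2 := congrArg (coeff 2) hZ
  simp [coeff_mul, Nat.sum_antidiagonal_succ, hf₁0, hf₂0, psComp, mul_assoc] at h2
  apply mul_left_cancel₀ hg0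
  linear_combination h2

lemma b₀_mul_w₀_eq_b₂ {W F : PowerSeries K} (hg0 : constantCoeff g ≠ 0)
    (hf₂0 : coeff 0 f₂ = 0) (hf₂2 : coeff 2 f₂ = 0)
    (hW : C (constantCoeff b) * f₂ * (b - C (constantCoeff b)) =
        C (coeff 2 b) * X ^ 2 * b * f₂ +
          X ^ 3 * g * (C (constantCoeff b) * psComp W F - C (coeff 2 b))) :
    constantCoeff b * constantCoeff W = coeff 2 b := by
  have h3 := congrArg (coeff 3) hW
  simp [coeff_mul, Nat.sum_antidiagonal_succ, hf₂0, hf₂2, psComp, mul_assoc] at h3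
  apply mul_left_cancel₀ hg0
  linear_combination -h3

lemma X_sq_mul_W_column {W : PowerSeries K} (hb0 : constantCoeff b ≠ 0) (hf₂ : f₂ ≠ 0)
    (hF : constantCoeff (f₁ * f₂) = 0)
    (hw₀ : constantCoeff b * constantCoeff W = coeff 2 b)
    (hW : C (constantCoeff b) * f₂ * (b - C (constantCoeff b)) =
        C (coeff 2 b) * X ^ 2 * b * f₂ +
          X ^ 3 * g * (C (constantCoeff b) * psComp W (f₁ * f₂) - C (coeff 2 b))) :
    X ^ 2 * (C (constantCoeff W) * b +
        X * g * f₁ * psComp (mk fun i => coeff (i + 1) W) (f₁ * f₂)) = b - C (constantCoeff b) := by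
  have hsplit := psComp_eq_C_add_mul W hF
  have hw₀C := congrArg C hw₀
  rw [map_mul] at hw₀C
  apply mul_left_cancel₀ (mul_ne_zero ((map_ne_zero C).mpr hb0) hf₂)
  linear_combination -hW - (C (constantCoeff b) * X ^ 3 * g) * hsplit +
    (X ^ 2 * b * f₂ - X ^ 3 * g) * hw₀C

lemma X_sq_mul_Z₂_column {Z : PowerSeries K} (hb0 : constantCoeff b ≠ 0) (hf₂ : f₂ ≠ 0)
    (hF : constantCoeff (f₁ * f₂) = 0)
    (hz₀ : constantCoeff b * constantCoeff Z = constantCoeff g * coeff 1 f₁)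
    (hZ : C (constantCoeff b) * X ^ 2 * g * psComp Z (f₁ * f₂) =
        C (constantCoeff g * coeff 1 f₁) * X ^ 2 * g +
          f₂ * (C (constantCoeff b) * g * f₁ - C (constantCoeff g * coeff 1 f₁) * X * b)) :
    X ^ 2 * (C (constantCoeff Z) * b +
        X * g * f₁ * psComp (mk fun i => coeff (i + 1) Z) (f₁ * f₂)) = X * g * f₁ := by
  have hsplit := psComp_eq_C_add_mul Z hF
  have hz₀C := congrArg C hz₀
  rw [map_mul] at hz₀C
  apply mul_left_cancel₀ (mul_ne_zero ((map_ne_zero C).mpr hb0) hf₂)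
  linear_combination X * hZ - (C (constantCoeff b) * X ^ 3 * g) * hsplit +
    (X ^ 2 * b * f₂ - X ^ 3 * g) * hz₀C

end DoubleAlmostRiordan

theorem dar_production_matrix_general
    (b g f₁ f₂ : PowerSeries K)
    (hb0 : constantCoeff b ≠ 0)
    (hg0 : constantCoeff g ≠ 0)
    (hf₁o : ∀ k, coeff (2 * k) f₁ = 0)
    (hf₂o : ∀ k, coeff (2 * k) f₂ = 0)
    (hf₂1 : coeff 1 f₂ ≠ 0)
    (At Z₁t Z₂t Wt : PowerSeries K)
    (hA : f₁ * f₂ = X ^ 2 * psComp At (f₁ * f₂))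
    (hZ₁ : g * (1 - X ^ 2 * psComp Z₁t (f₁ * f₂)) = C (constantCoeff g))
    (hZ₂ : C (constantCoeff b) * X ^ 2 * g * psComp Z₂t (f₁ * f₂) =
        C (constantCoeff g * coeff 1 f₁) * X ^ 2 * g +
          f₂ * (C (constantCoeff b) * g * f₁ -
            C (constantCoeff g * coeff 1 f₁) * X * b))
    (hW : C (constantCoeff b) * f₂ * (b - C (constantCoeff b)) =
        C (coeff 2 b) * X ^ 2 * b * f₂ +
          X ^ 3 * g * (C (constantCoeff b) * psComp Wt (f₁ * f₂) - C (coeff 2 b)))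
    (P : ℕ → ℕ → K)
    (hP0 : ∀ j, P j 0 = coeff j (psComp Wt (X ^ 2)))
    (hP1 : ∀ j, P j 1 = coeff j (X * psComp Z₁t (X ^ 2)))
    (hP2 : ∀ j, P j 2 = coeff j (psComp Z₂t (X ^ 2)))
    (hPk : ∀ j k, 3 ≤ k → P j k = coeff j (X ^ (k - 2) * psComp At (X ^ 2))) :
    ∀ n k : ℕ,
      ∑ j ∈ Finset.range (n + 1), dar b g f₁ f₂ n j * P j k =
        dar b g f₁ f₂ (n + 2) k := by
  intro n k
  have hf₁0 : coeff 0 f₁ = 0 := by simpa using hf₁o 0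
  have hf₂0 : coeff 0 f₂ = 0 := by simpa using hf₂o 0
  have h₁ : X ∣ f₁ := X_dvd_iff.mpr (by simpa using hf₁0)
  have h₂ : X ∣ f₂ := X_dvd_iff.mpr (by simpa using hf₂0)
  have hF : constantCoeff (f₁ * f₂) = 0 := by rw [map_mul, X_dvd_iff.mp h₁, zero_mul]
  have hf₂ : f₂ ≠ 0 := fun h => hf₂1 (by simp [h])
  rw [dar_eq_coeff_darCol]
  rcases k with _ | _ | _ | m
  · simp_rw [hP0]
    rw [sum_dar_mul_coeff_psComp h₁ h₂, ← coeff_X_pow_mul _ 2 n, X_sq_mul_W_column hb0 hf₂ hF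
      (b₀_mul_w₀_eq_b₂ hg0 hf₂0 (by simpa using hf₂o 1) hW) hW]
    simp [darCol_zero]
  · have hP1' : ∀ j, P j 1 = coeff j (X ^ 1 * psComp Z₁t (X ^ 2)) := fun j => by rw [hP1, pow_one]
    simp_rw [hP1']
    rw [sum_dar_mul_coeff_X_pow_mul_psComp h₁ h₂ _ one_ne_zero, darCol_one,
      ← coeff_X_pow_mul _ 2 n,
      show X ^ 2 * (X * g * psComp Z₁t (f₁ * f₂)) = X * g - C (constantCoeff g) * X by
        linear_combination (-X) * hZ₁]
    simp
  · simp_rw [hP2]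
    rw [sum_dar_mul_coeff_psComp h₁ h₂, ← coeff_X_pow_mul _ 2 n, X_sq_mul_Z₂_column hb0 hf₂ hF
      (b₀_mul_z₀_eq_g₀_mul_f₁₁ hg0 hf₁0 hf₂0 hZ₂) hZ₂, darCol_two]
  · simp_rw [hPk _ _ (by omega : 3 ≤ m + 3), show m + 3 - 2 = m + 1 by omega]
    rw [sum_dar_mul_coeff_X_pow_mul_psComp h₁ h₂ _ m.succ_ne_zero, ← coeff_X_pow_mul _ 2 n,
      mul_left_comm, ← hA, show m + 3 = m + 1 + 2 * 1 by ring,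
      darCol_add_two_mul _ _ _ _ m.succ_ne_zero, pow_one]

/-- Production matrix of a double almost-Riordan array:
`P = (W(t), tZ₁(t), Z₂(t), tA(t), t²A(t), …)` satisfies `D·P = D` with first two rows deleted. -/
theorem dar_production_matrix
    (b g f₁ f₂ : PowerSeries K)
    (hbe : ∀ k, coeff (2 * k + 1) b = 0)
    (hge : ∀ k, coeff (2 * k + 1) g = 0)
    (hb0 : constantCoeff b ≠ 0)
    (hg0 : constantCoeff g ≠ 0)
    (hf₁o : ∀ k, coeff (2 * k) f₁ = 0)
    (hf₂o : ∀ k, coeff (2 * k) f₂ = 0)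
    (hf₁1 : coeff 1 f₁ ≠ 0)
    (hf₂1 : coeff 1 f₂ ≠ 0)
    (At Z₁t Z₂t Wt : PowerSeries K)
    (hA : f₁ * f₂ = X ^ 2 * psComp At (f₁ * f₂))
    (hZ₁ : g * (1 - X ^ 2 * psComp Z₁t (f₁ * f₂)) = C (constantCoeff g))
    (hZ₂ : C (constantCoeff b) * X ^ 2 * g * psComp Z₂t (f₁ * f₂) =
        C (constantCoeff g * coeff 1 f₁) * X ^ 2 * g +
          f₂ * (C (constantCoeff b) * g * f₁ -
            C (constantCoeff g * coeff 1 f₁) * X * b))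
    (hW : C (constantCoeff b) * f₂ * (b - C (constantCoeff b)) =
        C (coeff 2 b) * X ^ 2 * b * f₂ +
          X ^ 3 * g * (C (constantCoeff b) * psComp Wt (f₁ * f₂) - C (coeff 2 b)))
    (P : ℕ → ℕ → K)
    (hP0 : ∀ j, P j 0 = coeff j (psComp Wt (X ^ 2)))
    (hP1 : ∀ j, P j 1 = coeff j (X * psComp Z₁t (X ^ 2)))
    (hP2 : ∀ j, P j 2 = coeff j (psComp Z₂t (X ^ 2)))
    (hPk : ∀ j k, 3 ≤ k → P j k = coeff j (X ^ (k - 2) * psComp At (X ^ 2))) :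
    ∀ n k : ℕ,
      ∑ j ∈ Finset.range (n + 1), dar b g f₁ f₂ n j * P j k =
        dar b g f₁ f₂ (n + 2) k :=
  dar_production_matrix_general b g f₁ f₂ hb0 hg0 hf₁o hf₂o hf₂1 At Z₁t Z₂t Wt hA hZ₁ hZ₂ hW P hP0
    hP1 hP2 hPk
end

section
/- Total positivity of compressed double Riordan arrays from Pólya frequency data: Let ĝ, f̂₁, f̂₂ ∈ ℝ[[t]] with f̂₁(0) = f̂₂(0) = 0. Assume the three Toeplitz matrices ([t^{i−j}]ĝ)_{i,j≥0}, ([t^{i−j+1}]f̂₁)_{i,j≥0} and ([t^{i−j+1}]f̂₂)_{i,j≥0} (entries with negative exponent being 0) are totally positive, i.e., ĝ, f̂₁ and f̂₂ are Pólya frequency formal power series. Then the compressed double Riordan array (ĝ;f̂₁,f̂₂) is totally positive. -/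
open PowerSeries

/-- An infinite real matrix is totally positive if every minor (determinant of a square
submatrix with strictly increasing row and column indices) is nonnegative. -/
def TotallyPositive (M : ℕ → ℕ → ℝ) : Prop :=
  ∀ (r : ℕ) (rows cols : Fin r → ℕ), StrictMono rows → StrictMono cols →
    0 ≤ (Matrix.of fun i j => M (rows i) (cols j)).det

/-- The compressed double Riordan array `(ĝ; f̂₁, f̂₂)`:
column `2ℓ` is `ĝ·(f̂₁f̂₂)^ℓ`, column `2ℓ+1` is `ĝ·f̂₁·(f̂₁f̂₂)^ℓ`. -/
noncomputable def cDR (g f₁ f₂ : PowerSeries ℝ) (n k : ℕ) : ℝ :=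
  if k % 2 = 0 then coeff n (g * (f₁ * f₂) ^ (k / 2))
  else coeff n (g * f₁ * (f₁ * f₂) ^ (k / 2))

/-- The compressed double almost-Riordan array `(b̂ | ĝ; f̂₁, f̂₂)`: column 0 is `b̂`,
column `2ℓ+1` is `t·ĝ·(f̂₁f̂₂)^ℓ`, column `2ℓ+2` is `t·ĝ·f̂₁·(f̂₁f̂₂)^ℓ`. -/
noncomputable def cDAR (b g f₁ f₂ : PowerSeries ℝ) (n k : ℕ) : ℝ :=
  if k = 0 then coeff n b
  else if k % 2 = 1 then coeff n (X * g * (f₁ * f₂) ^ ((k - 1) / 2))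
  else coeff n (X * g * f₁ * (f₁ * f₂) ^ ((k - 2) / 2))

/-!
Write `U(f₁, f₂) = cDR 1 f₁ f₂` and `T(f)` for the lower triangular Toeplitz matrix of `f`.
Coefficient extraction gives `cDR g f₁ f₂ = T(g) · U(f₁, f₂)`. Column `k + 1` of `U(f₁, f₂)` is
`f₁` times column `k` of `U(f₂, f₁)`, and `f₁(0) = 0`, so `U(f₁, f₂) = 1 ⊕ F₁ · U(f₂, f₁)`
with `F₁ = ([t^(n+1-j)] f₁)_{n,j}`. Total positivity survives products (by Cauchy–Binet, the
factors being row-finite) and `1 ⊕ ·`. As this recursion shifts columns by one, total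
positivity of the first `K` columns of `U(f₁, f₂)` follows by induction on `K`, for all pairs
`(f₁, f₂)` at once.
-/

open Finset

namespace Matrix

variable {R : Type*} [CommRing R] {r m : ℕ}

theorem det_mul_eq_sum_prod_mul_det_submatrix (A : Matrix (Fin r) (Fin m) R)
    (B : Matrix (Fin m) (Fin r) R) :
    (A * B).det = ∑ f : Fin r → Fin m, (∏ i, A i (f i)) * (B.submatrix f id).det := by
  have hrows : ((A * B : Matrix (Fin r) (Fin r) R) : Fin r → Fin r → R)
      = fun i => ∑ j, A i j • B j := by
    ext i k
    simp [mul_apply, Finset.sum_apply]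
  calc (A * B).det = detRowAlternating fun i => ∑ j, A i j • B j := congrArg _ hrows
    _ = ∑ f : Fin r → Fin m, detRowAlternating fun i => A i (f i) • B (f i) :=
      detRowAlternating.toMultilinearMap.map_sum fun i j => A i j • B j
    _ = _ := sum_congr rfl fun f _ =>
      (detRowAlternating.map_smul_univ (fun i => A i (f i)) (fun i => B (f i))).trans
        (smul_eq_mul _ _)

open scoped Classical in
/-- The Cauchy–Binet formula. -/
theorem det_mul_eq_sum_det_submatrix (A : Matrix (Fin r) (Fin m) R)
    (B : Matrix (Fin m) (Fin r) R) :
    (A * B).det =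
      ∑ s ∈ univ.filter StrictMono, (A.submatrix id s).det * (B.submatrix s id).det := by
  set F : (Fin r → Fin m) → R := fun f => (∏ i, A i (f i)) * (B.submatrix f id).det
  have hperm : ∀ s : Fin r → Fin m, (A.submatrix id s).det * (B.submatrix s id).det
      = ∑ σ : Equiv.Perm (Fin r), F (s ∘ σ) := by
    intro s
    rw [← det_transpose, det_apply', sum_mul]
    refine sum_congr rfl fun σ _ => ?_
    have : B.submatrix (s ∘ σ) id = (B.submatrix s id).submatrix σ id := rfl
    simp only [F, this, det_permute, transpose_apply, submatrix_apply, id, Function.comp_apply]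
    ring
  rw [det_mul_eq_sum_prod_mul_det_submatrix, sum_congr rfl fun s _ => hperm s, ← sum_product']
  symm
  refine sum_of_injOn (fun p => p.1 ∘ p.2) ?_ (fun _ _ => mem_univ _) ?_ fun _ _ => rfl
  · rintro ⟨s, σ⟩ hsσ ⟨t, τ⟩ htτ (h : s ∘ σ = t ∘ τ)
    simp only [mem_coe, mem_product, mem_filter, mem_univ, true_and, and_true] at hsσ htτ
    obtain rfl : s = t := by
      rw [← hsσ.range_inj htτ, ← σ.surjective.range_comp, h, τ.surjective.range_comp]
    obtain rfl : σ = τ := Equiv.ext fun i => hsσ.injective (congrFun h i)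
    rfl
  · intro f _ hf
    have hinj : ¬ Function.Injective f := by
      refine fun hinj => hf ⟨(f ∘ Tuple.sort f, (Tuple.sort f)⁻¹), ?_, ?_⟩
      · simpa using (Tuple.monotone_sort f).strictMono_of_injective
          (hinj.comp (Equiv.injective _))
      · ext; simp
    obtain ⟨i, j, hij, hne⟩ := Function.not_injective_iff.mp hinj
    have hrow : B.submatrix f id i = B.submatrix f id j := by ext; simp [hij]
    exact mul_eq_zero_of_right _ (det_zero_of_row_eq hne hrow)

end Matrix

def oneDirectSum (X : ℕ → ℕ → ℝ) : ℕ → ℕ → ℝ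
  | 0, 0 => 1
  | n + 1, k + 1 => X n k
  | _, _ => 0

section oneDirectSum

variable {X : ℕ → ℕ → ℝ} {n k : ℕ}

theorem oneDirectSum_zero_zero : oneDirectSum X 0 0 = 1 := rfl

theorem oneDirectSum_zero_left (hk : k ≠ 0) : oneDirectSum X 0 k = 0 := by
  obtain ⟨k, rfl⟩ := Nat.exists_eq_succ_of_ne_zero hk
  rfl

theorem oneDirectSum_zero_right (hn : n ≠ 0) : oneDirectSum X n 0 = 0 := by
  obtain ⟨n, rfl⟩ := Nat.exists_eq_succ_of_ne_zero hn
  rfl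

theorem oneDirectSum_of_ne_zero (hn : n ≠ 0) (hk : k ≠ 0) :
    oneDirectSum X n k = X (n - 1) (k - 1) := by
  obtain ⟨n, rfl⟩ := Nat.exists_eq_succ_of_ne_zero hn
  obtain ⟨k, rfl⟩ := Nat.exists_eq_succ_of_ne_zero hk
  rfl

end oneDirectSum

def truncCols (K : ℕ) (M : ℕ → ℕ → ℝ) (n k : ℕ) : ℝ :=
  if k < K then M n k else 0

noncomputable def toeplitz {R : Type*} [Semiring R] (f : PowerSeries R) (n j : ℕ) : R :=
  if j ≤ n then coeff (n - j) f else 0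

namespace TotallyPositive

variable {M P Q X : ℕ → ℕ → ℝ}

theorem mul (c : ℕ) (hP : TotallyPositive P) (hQ : TotallyPositive Q)
    (hP_zero : ∀ n j, n + c ≤ j → P n j = 0) :
    TotallyPositive fun n k => ∑ j ∈ range (n + c), P n j * Q j k := by
  intro r rows cols hrows hcols
  set N := univ.sup rows + c
  have hentry : ∀ i k, ∑ j ∈ range (rows i + c), P (rows i) j * Q j (cols k)
      = ∑ j : Fin N, P (rows i) j * Q j (cols k) := by
    intro i k
    have hi : rows i ≤ univ.sup rows := le_sup (mem_univ i)
    rw [Fin.sum_univ_eq_sum_range (fun j => P (rows i) j * Q j (cols k))]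
    refine sum_subset (range_subset_range.2 (by omega)) fun j _ hj => ?_
    rw [hP_zero _ _ (by simpa using hj), zero_mul]
  have hfactor : (Matrix.of fun i k => ∑ j ∈ range (rows i + c), P (rows i) j * Q j (cols k))
      = Matrix.of (fun i (j : Fin N) => P (rows i) j) *
          Matrix.of fun (j : Fin N) k => Q j (cols k) := by
    ext i k
    simp [Matrix.mul_apply, hentry]
  rw [hfactor, Matrix.det_mul_eq_sum_det_submatrix]
  refine sum_nonneg fun s hs => ?_
  have hs' : StrictMono fun j => (s j : ℕ) := Fin.val_strictMono.comp (mem_filter.mp hs).2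
  exact mul_nonneg (hP r rows _ hrows hs') (hQ r _ cols hs' hcols)

theorem oneDirectSum (hX : TotallyPositive X) : TotallyPositive (oneDirectSum X) := by
  have hpos : ∀ (r : ℕ) (rows cols : Fin r → ℕ), StrictMono rows → StrictMono cols →
      (∀ i, rows i ≠ 0) → (∀ j, cols j ≠ 0) →
      0 ≤ (Matrix.of fun i j => _root_.oneDirectSum X (rows i) (cols j)).det := by
    intro r rows cols hrows hcols hr hc
    have hpred {f : Fin r → ℕ} (hf : StrictMono f) (h0 : ∀ i, f i ≠ 0) :
        StrictMono fun i => f i - 1 := fun a b hab => by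
      have := hf hab; have := h0 a; show f a - 1 < f b - 1; omega
    have hshift : (Matrix.of fun i j => _root_.oneDirectSum X (rows i) (cols j))
        = Matrix.of fun i j => X (rows i - 1) (cols j - 1) := by
      ext i j
      exact oneDirectSum_of_ne_zero (hr i) (hc j)
    rw [hshift]
    exact hX r _ _ (hpred hrows hr) (hpred hcols hc)
  intro r rows cols hrows hcols
  rcases r with _ | r
  · simp
  have hne {f : Fin (r + 1) → ℕ} (hf : StrictMono f) (i : Fin (r + 1))
      (h : i ≠ 0 ∨ f 0 ≠ 0) : f i ≠ 0 := by
    rcases h with h | h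
    · exact ((Nat.zero_le _).trans_lt (hf (Fin.pos_iff_ne_zero.mpr h))).ne'
    · have := hf.monotone (Fin.zero_le i); omega
  by_cases hr0 : rows 0 = 0 <;> by_cases hc0 : cols 0 = 0
  · rw [Matrix.det_succ_column_zero, Fin.sum_univ_succ, Fintype.sum_eq_zero _ fun i => ?_,
      add_zero]
    · simp only [Fin.val_zero, pow_zero, Matrix.of_apply, hr0, hc0, oneDirectSum_zero_zero,
        one_mul, Fin.succAbove_zero]
      exact hpos r (fun i => rows i.succ) (fun j => cols j.succ)
          (hrows.comp Fin.strictMono_succ) (hcols.comp Fin.strictMono_succ)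
          (fun i => hne hrows _ (.inl i.succ_ne_zero))
          (fun j => hne hcols _ (.inl j.succ_ne_zero))
    · rw [Matrix.of_apply, hc0, oneDirectSum_zero_right (hne hrows _ (.inl i.succ_ne_zero)),
        mul_zero, zero_mul]
  · refine (Matrix.det_eq_zero_of_row_eq_zero 0 fun j => ?_).ge
    rw [Matrix.of_apply, hr0, oneDirectSum_zero_left (hne hcols j (.inr hc0))]
  · refine (Matrix.det_eq_zero_of_column_eq_zero 0 fun i => ?_).ge
    rw [Matrix.of_apply, hc0, oneDirectSum_zero_right (hne hrows i (.inr hr0))]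
  · exact hpos _ rows cols hrows hcols (fun i => hne hrows i (.inr hr0))
      (fun j => hne hcols j (.inr hc0))

theorem of_forall_truncCols (h : ∀ K, TotallyPositive (truncCols K M)) : TotallyPositive M := by
  intro r rows cols hrows hcols
  have hK : ∀ j, cols j < univ.sup cols + 1 := fun j => Nat.lt_succ_of_le (le_sup (mem_univ j))
  simpa [truncCols, hK] using h (univ.sup cols + 1) r rows cols hrows hcols

end TotallyPositive

theorem totallyPositive_truncCols_zero {M : ℕ → ℕ → ℝ} :
    TotallyPositive (truncCols 0 M) := by
  intro r rows cols _ _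
  rcases r with _ | r
  · simp
  · exact (Matrix.det_eq_zero_of_column_eq_zero 0 fun i => by simp [truncCols]).ge

theorem coeff_mul_eq_sum_toeplitz {R : Type*} [CommSemiring R] (f u : PowerSeries R) (n : ℕ) :
    coeff n (f * u) = ∑ j ∈ range (n + 1), toeplitz f n j * coeff j u := by
  rw [mul_comm f u, coeff_mul,
    Nat.sum_antidiagonal_eq_sum_range_succ fun a b => coeff a u * coeff b f]
  refine sum_congr rfl fun j hj => ?_
  rw [toeplitz, if_pos (Nat.lt_succ_iff.mp (mem_range.mp hj)), mul_comm]

noncomputable def cDRCol (f₁ f₂ : PowerSeries ℝ) (k : ℕ) : PowerSeries ℝ :=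
  if k % 2 = 0 then (f₁ * f₂) ^ (k / 2) else f₁ * (f₁ * f₂) ^ (k / 2)

theorem cDR_eq_coeff_mul_cDRCol (g f₁ f₂ : PowerSeries ℝ) (n k : ℕ) :
    cDR g f₁ f₂ n k = coeff n (g * cDRCol f₁ f₂ k) := by
  unfold cDR cDRCol
  split_ifs <;> ring_nf

theorem cDRCol_zero (f₁ f₂ : PowerSeries ℝ) : cDRCol f₁ f₂ 0 = 1 := by
  simp [cDRCol]

theorem cDRCol_succ (f₁ f₂ : PowerSeries ℝ) (k : ℕ) :
    cDRCol f₁ f₂ (k + 1) = f₁ * cDRCol f₂ f₁ k := by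
  obtain ⟨l, rfl | rfl⟩ := Nat.even_or_odd' k
  · rw [cDRCol, cDRCol, if_neg (by omega), if_pos (by omega), show (2 * l + 1) / 2 = l by omega,
      show 2 * l / 2 = l by omega, mul_comm f₂]
  · rw [cDRCol, cDRCol, if_pos (by omega), if_neg (by omega),
      show (2 * l + 1 + 1) / 2 = l + 1 by omega, show (2 * l + 1) / 2 = l by omega, pow_succ]
    ring

theorem truncCols_succ_cDR_one {f₁ f₂ : PowerSeries ℝ} (hf₁ : constantCoeff f₁ = 0)
    (K : ℕ) :
    truncCols (K + 1) (cDR 1 f₁ f₂) = oneDirectSum fun n k =>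
      ∑ j ∈ range (n + 2), toeplitz f₁ (n + 1) j * truncCols K (cDR 1 f₂ f₁) j k := by
  ext n k
  rcases n with _ | n <;> rcases k with _ | k <;>
    simp only [truncCols, cDR_eq_coeff_mul_cDRCol, one_mul, cDRCol_zero, cDRCol_succ]
  · simp [oneDirectSum]
  · simp [oneDirectSum, hf₁]
  · simp [oneDirectSum, coeff_one]
  · rw [oneDirectSum, coeff_mul_eq_sum_toeplitz]
    split_ifs <;> simp_all

theorem totallyPositive_truncCols_cDR_one (K : ℕ) : ∀ {f₁ f₂ : PowerSeries ℝ},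
    constantCoeff f₁ = 0 → constantCoeff f₂ = 0 →
    TotallyPositive (fun n j => toeplitz f₁ (n + 1) j) →
    TotallyPositive (fun n j => toeplitz f₂ (n + 1) j) →
    TotallyPositive (truncCols K (cDR 1 f₁ f₂)) := by
  induction K with
  | zero => exact fun _ _ _ _ => totallyPositive_truncCols_zero
  | succ K ih =>
    intro f₁ f₂ hf₁ hf₂ hT₁ hT₂
    rw [truncCols_succ_cDR_one hf₁]
    exact (hT₁.mul 2 (ih hf₂ hf₁ hT₂ hT₁) fun n j h => if_neg (by omega)).oneDirectSum

theorem cDR_eq_sum_toeplitz_mul (g f₁ f₂ : PowerSeries ℝ) (n k : ℕ) :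
    cDR g f₁ f₂ n k = ∑ j ∈ range (n + 1), toeplitz g n j * cDR 1 f₁ f₂ j k := by
  simp only [cDR_eq_coeff_mul_cDRCol, one_mul, coeff_mul_eq_sum_toeplitz]

/-- Total positivity of compressed double Riordan arrays from Pólya frequency data. -/
theorem cDR_TP_of_PF
    (g f₁ f₂ : PowerSeries ℝ)
    (hf₁0 : constantCoeff f₁ = 0)
    (hf₂0 : constantCoeff f₂ = 0)
    (hTg : TotallyPositive fun i j => if j ≤ i then coeff (i - j) g else 0)
    (hTf₁ : TotallyPositive fun i j => if j ≤ i + 1 then coeff (i + 1 - j) f₁ else 0)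
    (hTf₂ : TotallyPositive fun i j => if j ≤ i + 1 then coeff (i + 1 - j) f₂ else 0) :
    TotallyPositive (cDR g f₁ f₂) := by
  have hU : TotallyPositive (cDR 1 f₁ f₂) := TotallyPositive.of_forall_truncCols fun K =>
    totallyPositive_truncCols_cDR_one K hf₁0 hf₂0 hTf₁ hTf₂
  rw [funext₂ (cDR_eq_sum_toeplitz_mul g f₁ f₂)]
  exact hTg.mul 1 hU fun n j h => if_neg (by omega)
end

section
/- The compressed double almost-Riordan array (1|ĝ;f̂₁,f̂₂) is totally positive if and only if the compressed double Riordan array (ĝ;f̂₁,f̂₂) is totally positive. Here ĝ, f̂₁, f̂₂ ∈ ℝ[[t]] with f̂₁(0) = f̂₂(0) = 0. -/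
/-!
Multiplying by `t` shifts a column down by one row, so `(1 | ĝ; f̂₁, f̂₂)` is the block diagonal
matrix `1 ⊕ (ĝ; f̂₁, f̂₂)`. A minor of `1 ⊕ M` either has a zero row or column, or is a minor of `M`,
possibly after expanding along the corner entry `1`.
-/

open PowerSeries

def oneOplus (M : ℕ → ℕ → ℝ) : ℕ → ℕ → ℝ
  | 0, 0 => 1
  | n + 1, k + 1 => M n k
  | _, _ => 0

section oneOplus

variable {M : ℕ → ℕ → ℝ} {n k : ℕ}

@[simp] theorem oneOplus_zero_zero : oneOplus M 0 0 = 1 := rfl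

theorem oneOplus_zero_left (hk : k ≠ 0) : oneOplus M 0 k = 0 := by
  obtain ⟨k, rfl⟩ := Nat.exists_eq_succ_of_ne_zero hk
  rfl

theorem oneOplus_zero_right (hn : n ≠ 0) : oneOplus M n 0 = 0 := by
  obtain ⟨n, rfl⟩ := Nat.exists_eq_succ_of_ne_zero hn
  rfl

theorem oneOplus_of_ne_zero (hn : n ≠ 0) (hk : k ≠ 0) : oneOplus M n k = M (n - 1) (k - 1) := by
  obtain ⟨n, rfl⟩ := Nat.exists_eq_succ_of_ne_zero hn
  obtain ⟨k, rfl⟩ := Nat.exists_eq_succ_of_ne_zero hk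
  rfl

end oneOplus

theorem cDAR_one_eq_oneOplus_cDR (g f₁ f₂ : PowerSeries ℝ) :
    cDAR 1 g f₁ f₂ = oneOplus (cDR g f₁ f₂) := by
  funext n k
  rcases n with _ | n <;> rcases k with _ | k
  · simp [cDAR, oneOplus]
  · simp [cDAR, oneOplus, mul_assoc]
  · simp [cDAR, oneOplus, coeff_one]
  · rcases Nat.mod_two_eq_zero_or_one k with hk | hk
    · simp [cDAR, cDR, oneOplus, hk, Nat.succ_mod_two_eq_one_iff.mpr hk, mul_assoc]
    · have hk' : (k - 1) / 2 = k / 2 := by omega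
      simp [cDAR, cDR, oneOplus, hk, hk', Nat.succ_mod_two_eq_zero_iff.mpr hk, mul_assoc]

theorem StrictMono.sub_one {α : Type*} [Preorder α] {f : α → ℕ} (hf : StrictMono f) (hpos : ∀ i, 0 < f i) :
    StrictMono fun i => f i - 1 := fun a b hab => by
  show f a - 1 < f b - 1
  have := hf hab
  have := hpos a
  omega

namespace TotallyPositive

variable {M : ℕ → ℕ → ℝ}

theorem of_oneOplus (h : TotallyPositive (oneOplus M)) : TotallyPositive M :=
  fun r rows cols hr hc => h r (rows · + 1) (cols · + 1) (hr.add_const 1) (hc.add_const 1)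

theorem oneOplus_minor_nonneg_of_pos (h : TotallyPositive M) {r : ℕ} {rows cols : Fin r → ℕ}
    (hr : StrictMono rows) (hc : StrictMono cols)
    (hrpos : ∀ i, 0 < rows i) (hcpos : ∀ j, 0 < cols j) :
    0 ≤ (Matrix.of fun i j => oneOplus M (rows i) (cols j)).det := by
  have hshift : (Matrix.of fun i j => oneOplus M (rows i) (cols j)) =
      Matrix.of fun i j => M (rows i - 1) (cols j - 1) := by
    ext i j
    exact oneOplus_of_ne_zero (hrpos i).ne' (hcpos j).ne'
  rw [hshift]
  exact h r _ _ (hr.sub_one hrpos) (hc.sub_one hcpos)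

theorem oneOplus (h : TotallyPositive M) : TotallyPositive (oneOplus M) := by
  intro r rows cols hr hc
  rcases r with _ | r
  · simp
  have hrow : ∀ i, rows 0 ≤ rows i := fun i => hr.monotone (Fin.zero_le i)
  have hcol : ∀ j, cols 0 ≤ cols j := fun j => hc.monotone (Fin.zero_le j)
  rcases Nat.eq_zero_or_pos (rows 0) with hr0 | hr0 <;>
    rcases Nat.eq_zero_or_pos (cols 0) with hc0 | hc0
  · -- the minor is `1 ⊕ (a minor with positive indices)`
    have hminor := h.oneOplus_minor_nonneg_of_pos (hr.comp Fin.strictMono_succ)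
      (hc.comp Fin.strictMono_succ) (fun i => hr0 ▸ hr (Fin.succ_pos i))
      (fun j => hc0 ▸ hc (Fin.succ_pos j))
    rw [Matrix.det_succ_column_zero, Fin.sum_univ_succ, Finset.sum_eq_zero fun i _ => by
      rw [Matrix.of_apply, hc0, oneOplus_zero_right (hr0 ▸ hr (Fin.succ_pos i)).ne',
        mul_zero, zero_mul]]
    simp only [Fin.val_zero, pow_zero, one_mul, Matrix.of_apply, hr0, hc0, oneOplus_zero_zero,
      Fin.succAbove_zero, add_zero]
    exact hminor
  · rw [Matrix.det_eq_zero_of_row_eq_zero 0 fun j => by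
      rw [Matrix.of_apply, hr0, oneOplus_zero_left (hc0.trans_le (hcol j)).ne']]
  · rw [Matrix.det_eq_zero_of_column_eq_zero 0 fun i => by
      rw [Matrix.of_apply, hc0, oneOplus_zero_right (hr0.trans_le (hrow i)).ne']]
  · exact h.oneOplus_minor_nonneg_of_pos hr hc (fun i => hr0.trans_le (hrow i))
      (fun j => hc0.trans_le (hcol j))

end TotallyPositive

theorem totallyPositive_oneOplus_iff {M : ℕ → ℕ → ℝ} :
    TotallyPositive (oneOplus M) ↔ TotallyPositive M :=
  ⟨TotallyPositive.of_oneOplus, TotallyPositive.oneOplus⟩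

theorem cDAR_one_TP_iff_general
    (g f₁ f₂ : PowerSeries ℝ) :
    TotallyPositive (cDAR 1 g f₁ f₂) ↔ TotallyPositive (cDR g f₁ f₂) := by
  rw [cDAR_one_eq_oneOplus_cDR, totallyPositive_oneOplus_iff]

/-- `(1 | ĝ; f̂₁, f̂₂)` is TP iff `(ĝ; f̂₁, f̂₂)` is TP. -/
theorem cDAR_one_TP_iff
    (g f₁ f₂ : PowerSeries ℝ)
    (hf₁0 : constantCoeff f₁ = 0)
    (hf₂0 : constantCoeff f₂ = 0) :
    TotallyPositive (cDAR 1 g f₁ f₂) ↔ TotallyPositive (cDR g f₁ f₂) :=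
  cDAR_one_TP_iff_general g f₁ f₂
end

section
/- Let ĝ, f̂₁, f̂₂ ∈ ℝ[[t]] with f̂₁(0) = f̂₂(0) = 0 and suppose the compressed double Riordan array (ĝ;f̂₁,f̂₂) is totally positive. Then for every real α > 0, the compressed double almost-Riordan array (t·ĝ + α | ĝ; f̂₁, f̂₂) is also totally positive. -/
open PowerSeries

/-! Since `t·ĝ` has no constant term, `(t·ĝ + α | ĝ; f̂₁, f̂₂)` is the matrix with first row
`(α, 0, 0, …)` on top of `(ĝ; f̂₁, f̂₂)` with its first column doubled. Doubling a column keeps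
total positivity (a minor either is a minor of the original matrix or has two equal columns), and
so does putting such a row on top (expand a minor along it). -/

def borderTop (a : ℝ) (M : ℕ → ℕ → ℝ) : ℕ → ℕ → ℝ
  | 0, k => if k = 0 then a else 0
  | n + 1, k => M n k

@[simp]
lemma borderTop_zero (a : ℝ) (M : ℕ → ℕ → ℝ) (k : ℕ) :
    borderTop a M 0 k = if k = 0 then a else 0 := rfl

@[simp]
lemma borderTop_succ (a : ℝ) (M : ℕ → ℕ → ℝ) (n k : ℕ) : borderTop a M (n + 1) k = M n k := rfl

lemma exists_ne_eq_of_monotone_of_not_strictMono {α β : Type*} [LinearOrder α] [PartialOrder β]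
    {f : α → β} (hf : Monotone f) (hf' : ¬ StrictMono f) : ∃ i j, i ≠ j ∧ f i = f j := by
  obtain ⟨i, j, hij, hne⟩ := Function.not_injective_iff.mp (hf.strictMono_iff_injective.not.mp hf')
  exact ⟨i, j, hne, hij⟩

theorem TotallyPositive.comp_monotone {M : ℕ → ℕ → ℝ} (hM : TotallyPositive M)
    {σ τ : ℕ → ℕ} (hσ : Monotone σ) (hτ : Monotone τ) :
    TotallyPositive fun n k => M (σ n) (τ k) := by
  intro r rows cols hrows hcols
  by_cases hr : StrictMono (σ ∘ rows)
  · by_cases hc : StrictMono (τ ∘ cols)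
    · exact hM r _ _ hr hc
    · obtain ⟨i, j, hij, heq⟩ :=
        exists_ne_eq_of_monotone_of_not_strictMono (hτ.comp hcols.monotone) hc
      refine (Matrix.det_zero_of_column_eq hij fun k => ?_).ge
      simp only [Matrix.of_apply, Function.comp_apply] at heq ⊢
      rw [heq]
  · obtain ⟨i, j, hij, heq⟩ :=
      exists_ne_eq_of_monotone_of_not_strictMono (hσ.comp hrows.monotone) hr
    refine (Matrix.det_zero_of_row_eq hij ?_).ge
    ext k
    simp only [Matrix.of_apply, Function.comp_apply] at heq ⊢
    rw [heq]

lemma borderTop_minor_nonneg_of_rows_ne_zero {M : ℕ → ℕ → ℝ} (hM : TotallyPositive M) (a : ℝ)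
    {r : ℕ} {rows cols : Fin r → ℕ} (hrows : StrictMono rows) (hcols : StrictMono cols)
    (hpos : ∀ i, rows i ≠ 0) :
    0 ≤ (Matrix.of fun i j => borderTop a M (rows i) (cols j)).det := by
  have hpred : TotallyPositive fun n k => M (n - 1) k :=
    hM.comp_monotone (fun _ _ h => Nat.sub_le_sub_right h 1) monotone_id
  convert hpred r rows cols hrows hcols using 3
  ext i j
  obtain ⟨m, hm⟩ := Nat.exists_eq_succ_of_ne_zero (hpos i)
  simp only [hm, borderTop_succ, Nat.succ_sub_one]

theorem TotallyPositive.borderTop {M : ℕ → ℕ → ℝ} (hM : TotallyPositive M) {a : ℝ}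
    (ha : 0 ≤ a) : TotallyPositive (borderTop a M) := by
  rintro (_ | s) rows cols hrows hcols
  · simp
  by_cases hr0 : rows 0 = 0
  swap
  · exact borderTop_minor_nonneg_of_rows_ne_zero hM a hrows hcols fun i =>
      ((Nat.pos_of_ne_zero hr0).trans_le (hrows.monotone (Fin.zero_le i))).ne'
  have hcols_succ : ∀ j : Fin s, cols j.succ ≠ 0 := fun j => (hcols j.succ_pos).ne_bot
  by_cases hc0 : cols 0 = 0
  · have hminor := borderTop_minor_nonneg_of_rows_ne_zero hM a
      (hrows.comp Fin.strictMono_succ) (hcols.comp Fin.strictMono_succ)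
      fun i => (hrows i.succ_pos).ne_bot
    rw [Matrix.det_succ_row_zero, Fin.sum_univ_succ]
    simp only [Matrix.of_apply, hr0, hc0, borderTop_zero, hcols_succ, if_false, if_true, mul_zero,
      zero_mul, Finset.sum_const_zero, add_zero, Fin.val_zero, pow_zero, one_mul,
      Fin.succAbove_zero]
    exact mul_nonneg ha hminor
  · refine (Matrix.det_eq_zero_of_row_eq_zero 0 fun j => ?_).ge
    have hcj : cols j ≠ 0 := by
      cases j using Fin.cases with
      | zero => exact hc0
      | succ j => exact hcols_succ j
    simp only [Matrix.of_apply, hr0, borderTop_zero, hcj, if_false]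

lemma cDAR_eq_borderTop_cDR (g f₁ f₂ : PowerSeries ℝ) (α : ℝ) :
    cDAR (X * g + C α) g f₁ f₂ = borderTop α fun n k => cDR g f₁ f₂ n (k - 1) := by
  ext (_ | n) (_ | k)
  · simp [cDAR, borderTop]
  · simp only [cDAR, borderTop, coeff_zero_eq_constantCoeff, map_mul, constantCoeff_X,
      zero_mul, ite_self, if_false, Nat.succ_ne_zero]
  · simp [cDAR, borderTop, cDR, coeff_succ_X_mul]
  · rcases Nat.even_or_odd k with ⟨l, rfl⟩ | ⟨l, rfl⟩
    · have h₁ : (l + l + 1) % 2 = 1 := by omega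
      have h₂ : (l + l) % 2 = 0 := by omega
      simp only [cDAR, borderTop, cDR, h₁, h₂, Nat.add_sub_cancel, if_true,
        Nat.succ_ne_zero, if_false, mul_assoc, coeff_succ_X_mul]
    · have h₁ : (2 * l + 1 + 1) % 2 ≠ 1 := by omega
      have h₂ : (2 * l + 1) % 2 ≠ 0 := by omega
      have h₃ : (2 * l + 1 + 1 - 2) / 2 = (2 * l + 1) / 2 := by omega
      simp only [cDAR, borderTop, cDR, h₁, h₂, h₃, Nat.add_sub_cancel, if_false,
        Nat.succ_ne_zero, mul_assoc, coeff_succ_X_mul]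

theorem cDAR_tg_add_alpha_TP_general
    (g f₁ f₂ : PowerSeries ℝ)
    (h : TotallyPositive (cDR g f₁ f₂)) :
    ∀ α : ℝ, 0 < α → TotallyPositive (cDAR (X * g + C α) g f₁ f₂) := by
  intro α hα
  rw [cDAR_eq_borderTop_cDR]
  exact (h.comp_monotone monotone_id fun _ _ hkl => Nat.sub_le_sub_right hkl 1).borderTop hα.le

/-- If `(ĝ; f̂₁, f̂₂)` is TP then `(t·ĝ + α | ĝ; f̂₁, f̂₂)` is TP for every `α > 0`. -/
theorem cDAR_tg_add_alpha_TP
    (g f₁ f₂ : PowerSeries ℝ)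
    (hf₁0 : constantCoeff f₁ = 0)
    (hf₂0 : constantCoeff f₂ = 0)
    (h : TotallyPositive (cDR g f₁ f₂)) :
    ∀ α : ℝ, 0 < α → TotallyPositive (cDAR (X * g + C α) g f₁ f₂) :=
  cDAR_tg_add_alpha_TP_general g f₁ f₂ h
end

section
/- Let ĝ, f̂₁, f̂₂ ∈ ℝ[[t]] with f̂₁(0) = f̂₂(0) = 0, and let b̂ = b₀ + b₁t with b₀ ≥ 0 and b₁ ≥ 0. If the compressed double Riordan array (ĝ;f̂₁,f̂₂) is totally positive, then the compressed double almost-Riordan array (b₀ + b₁t | ĝ; f̂₁, f̂₂) is also totally positive. -/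
open PowerSeries

/-!
Dropping its first row and column, `(b̂ | ĝ; f̂₁, f̂₂)` is `(ĝ; f̂₁, f̂₂)`; its first row is
`(b₀, 0, 0, …)` and its first column `(b₀, b₁, 0, …)`. So a minor either avoids row and column `0`
and is a minor of `(ĝ; f̂₁, f̂₂)`, or has a zero row or column, or, by Laplace expansion along its
single nonzero entry in the first row or column, is `b₀` or `b₁` times such a minor.
-/

def bordered {R : Type*} [Zero R] (v : ℕ → R) (M : ℕ → ℕ → R) : ℕ → ℕ → R
  | n, 0 => v n
  | 0, _ + 1 => 0
  | n + 1, k + 1 => M n k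

theorem bordered_zero_left {R : Type*} [Zero R] (v : ℕ → R) (M : ℕ → ℕ → R) {k : ℕ}
    (hk : k ≠ 0) : bordered v M 0 k = 0 := by
  obtain ⟨k, rfl⟩ := Nat.exists_eq_succ_of_ne_zero hk
  rfl

theorem cDAR_eq_bordered (b g f₁ f₂ : PowerSeries ℝ) :
    cDAR b g f₁ f₂ = bordered (fun n => coeff n b) (cDR g f₁ f₂) := by
  funext n k
  rcases k with _ | k
  · simp [cDAR, bordered]
  have hcol : cDAR b g f₁ f₂ n (k + 1) =
      coeff n (X * if k % 2 = 0 then g * (f₁ * f₂) ^ (k / 2)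
        else g * f₁ * (f₁ * f₂) ^ (k / 2)) := by
    rcases Nat.even_or_odd' k with ⟨l, rfl | rfl⟩
    · simp [cDAR, mul_assoc, Nat.add_mod]
    · have hl : (2 * l + 1) / 2 = l := by omega
      simp [cDAR, mul_assoc, Nat.add_mod, hl]
  rcases n with _ | n
  · rw [hcol, coeff_zero_X_mul, bordered]
  · rw [hcol, coeff_succ_X_mul, bordered, cDR]
    split_ifs <;> rfl

namespace Matrix

variable {R : Type*} [CommRing R] {n : ℕ}

theorem det_succ_eq_mul_of_row_zero (A : Matrix (Fin (n + 1)) (Fin (n + 1)) R)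
    (hA : ∀ j ≠ 0, A 0 j = 0) : A.det = A 0 0 * (A.submatrix Fin.succ Fin.succ).det := by
  rw [det_succ_row_zero, Fin.sum_univ_succ, Finset.sum_eq_zero fun j _ => by
    simp [hA j.succ (Fin.succ_ne_zero j)]]
  simp

theorem det_succ_eq_mul_of_column_zero (A : Matrix (Fin (n + 1)) (Fin (n + 1)) R)
    (hA : ∀ i ≠ 0, A i 0 = 0) : A.det = A 0 0 * (A.submatrix Fin.succ Fin.succ).det := by
  rw [← det_transpose, det_succ_eq_mul_of_row_zero _ hA, ← transpose_submatrix, det_transpose]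
  rfl

end Matrix

namespace TotallyPositive

variable {M : ℕ → ℕ → ℝ} {v : ℕ → ℝ}

theorem bordered_minor_nonneg_of_ne_zero (hM : TotallyPositive M) {r : ℕ}
    {rows cols : Fin r → ℕ} (hr : StrictMono rows) (hc : StrictMono cols)
    (hr0 : ∀ i, rows i ≠ 0) (hc0 : ∀ j, cols j ≠ 0) :
    0 ≤ (Matrix.of fun i j => bordered v M (rows i) (cols j)).det := by
  have hshift : (Matrix.of fun i j => bordered v M (rows i) (cols j)) =
      Matrix.of fun i j => M (rows i - 1) (cols j - 1) := by
    ext i j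
    obtain ⟨m, hm⟩ := Nat.exists_eq_succ_of_ne_zero (hr0 i)
    obtain ⟨k, hk⟩ := Nat.exists_eq_succ_of_ne_zero (hc0 j)
    simp [hm, hk, bordered]
  rw [hshift]
  refine hM r _ _ (fun i j hij => ?_) (fun i j hij => ?_)
  · have := hr hij; have := hr0 i; omega
  · have := hc hij; have := hc0 i; omega

theorem bordered_of_nonneg (hM : TotallyPositive M) (hv₀ : 0 ≤ v 0) (hv₁ : 0 ≤ v 1)
    (hv : ∀ n, 2 ≤ n → v n = 0) : TotallyPositive (bordered v M) := by
  intro r rows cols hr hc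
  rcases r with _ | r
  · simp
  set A := Matrix.of fun i j => bordered v M (rows i) (cols j)
  have hrows : ∀ i ≠ 0, rows 0 < rows i := fun i hi => hr (Fin.pos_iff_ne_zero.mpr hi)
  have hcols : ∀ j ≠ 0, cols 0 < cols j := fun j hj => hc (Fin.pos_iff_ne_zero.mpr hj)
  have hminor : 0 ≤ (A.submatrix Fin.succ Fin.succ).det :=
    bordered_minor_nonneg_of_ne_zero hM (hr.comp Fin.strictMono_succ) (hc.comp Fin.strictMono_succ)
      (fun i => (hrows _ i.succ_ne_zero).ne_bot) (fun j => (hcols _ j.succ_ne_zero).ne_bot)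
  by_cases hc0 : cols 0 = 0
  · obtain hr0 | hr0 | hr0 : rows 0 = 0 ∨ rows 0 = 1 ∨ 2 ≤ rows 0 := by omega
    · rw [Matrix.det_succ_eq_mul_of_row_zero A fun j hj => by
        simp [A, hr0, bordered_zero_left v M (hcols j hj).ne_bot]]
      exact mul_nonneg (by simpa [A, hr0, hc0, bordered]) hminor
    · rw [Matrix.det_succ_eq_mul_of_column_zero A fun i hi => by
        simpa [A, hc0, bordered] using hv _ (by have := hrows i hi; omega)]
      exact mul_nonneg (by simpa [A, hr0, hc0, bordered]) hminor
    · rw [Matrix.det_eq_zero_of_column_eq_zero 0 fun i => by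
        simpa [A, hc0, bordered] using hv _ (hr0.trans (hr.monotone (Fin.zero_le i)))]
  · by_cases hr0 : rows 0 = 0
    · rw [Matrix.det_eq_zero_of_row_eq_zero 0 fun j => by
        simpa [A, hr0] using bordered_zero_left v M
          (Nat.pos_of_ne_zero hc0 |>.trans_le (hc.monotone (Fin.zero_le j))).ne']
    · exact bordered_minor_nonneg_of_ne_zero hM hr hc
        (fun i => (Nat.pos_of_ne_zero hr0 |>.trans_le (hr.monotone (Fin.zero_le i))).ne')
        (fun j => (Nat.pos_of_ne_zero hc0 |>.trans_le (hc.monotone (Fin.zero_le j))).ne')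

end TotallyPositive

theorem cDAR_linear_TP_general
    (g f₁ f₂ : PowerSeries ℝ)
    (b₀ b₁ : ℝ) (hb₀ : 0 ≤ b₀) (hb₁ : 0 ≤ b₁)
    (h : TotallyPositive (cDR g f₁ f₂)) :
    TotallyPositive (cDAR (C b₀ + C b₁ * X) g f₁ f₂) := by
  rw [cDAR_eq_bordered]
  refine h.bordered_of_nonneg (by simpa) (by simpa [coeff_X]) fun n hn => ?_
  simp [coeff_C, coeff_X, show n ≠ 0 by omega, show n ≠ 1 by omega]

/-- If `(ĝ; f̂₁, f̂₂)` is TP and `b̂ = b₀ + b₁t` with `b₀, b₁ ≥ 0`,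
then `(b₀ + b₁t | ĝ; f̂₁, f̂₂)` is TP. -/
theorem cDAR_linear_TP
    (g f₁ f₂ : PowerSeries ℝ)
    (hf₁0 : constantCoeff f₁ = 0)
    (hf₂0 : constantCoeff f₂ = 0)
    (b₀ b₁ : ℝ) (hb₀ : 0 ≤ b₀) (hb₁ : 0 ≤ b₁)
    (h : TotallyPositive (cDR g f₁ f₂)) :
    TotallyPositive (cDAR (C b₀ + C b₁ * X) g f₁ f₂) :=
  cDAR_linear_TP_general g f₁ f₂ b₀ b₁ hb₀ hb₁ h
end
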